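/- arXiv:1512.01752 — 5 statements merged into one kernel-verified Lean document; each statement's English description precedes it below -/
import Mathlib

section
/- In the lossy counting algorithm, every item whose true frequency exceeds εN is guaranteed to have a tuple present in the data structure after processing N elements. -/
/-!  Manku–Motwani lossy counting: stream processed in epochs of length `L = ⌈1/ε⌉`.
A tuple `(f, Δ)` is kept per item; on arrival of `e` in epoch `t` we increment `f`
or insert `(1, t-1)`; at the end of each epoch `t` we delete tuples with `f + Δ ≤ t`. -/

variable {α : Type*} [DecidableEq α]

/-- Insert/increment step: item `e` arrives in epoch `t`. -/
def lcInsert (σ : α → Option (ℕ × ℕ)) (t : ℕ) (e : α) : α → Option (ℕ × ℕ) :=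
  fun x =>
    if x = e then
      match σ e with
      | some (f, Δ) => some (f + 1, Δ)
      | none => some (1, t - 1)
    else σ x

/-- End-of-epoch deletion: remove all tuples with `f + Δ ≤ t`. -/
def lcDelete (σ : α → Option (ℕ × ℕ)) (t : ℕ) : α → Option (ℕ × ℕ) :=
  fun x =>
    match σ x with
    | some (f, Δ) => if f + Δ ≤ t then none else some (f, Δ)
    | none => none

/-- State of the lossy counting structure after processing the remaining stream,
having already processed `n` elements. The current element is element `n+1`,
belonging to epoch `⌈(n+1)/L⌉`; deletion happens at the end of each epoch. -/
def lcAux (L : ℕ) : List α → ℕ → (α → Option (ℕ × ℕ)) → (α → Option (ℕ × ℕ))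
  | [], _, σ => σ
  | e :: rest, n, σ =>
    let n' := n + 1
    let t := (n' + L - 1) / L
    let σ' := lcInsert σ t e
    lcAux L rest n' (if n' % L = 0 then lcDelete σ' t else σ')

/-- State after processing the whole stream `s`. -/
def lcState (L : ℕ) (s : List α) : α → Option (ℕ × ℕ) :=
  lcAux L s 0 fun _ => none

/-- The invariant of the proof: after `n` elements, the true count of an item is at most
`f + Δ` if it has a tuple `(f, Δ)`, and at most the number `n / L` of completed epochs if it
has none. -/
def countBound (L n : ℕ) : Option (ℕ × ℕ) → ℕ
  | none => n / L
  | some (f, Δ) => f + Δ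

lemma countBound_mono {L n m : ℕ} (h : n ≤ m) (o : Option (ℕ × ℕ)) :
    countBound L n o ≤ countBound L m o := by
  cases o with
  | none => exact Nat.div_le_div_right h
  | some p => exact le_rfl

lemma lcInsert_of_ne (σ : α → Option (ℕ × ℕ)) (t : ℕ) {e x : α} (h : x ≠ e) :
    lcInsert σ t e x = σ x := by
  simp [lcInsert, h]

lemma countBound_lcInsert_self (σ : α → Option (ℕ × ℕ)) (L n : ℕ) (e : α) :
    countBound L n (σ e) + 1 ≤ countBound L n (lcInsert σ (n / L + 1) e e) := by
  cases h : σ e with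
  | none => simp [lcInsert, h, countBound]
  | some p => obtain ⟨f, Δ⟩ := p; simp [lcInsert, h, countBound]

lemma countBound_le_lcDelete {β : Type*} (σ : β → Option (ℕ × ℕ)) {L n t : ℕ} (ht : t ≤ n / L)
    (x : β) :
    countBound L n (σ x) ≤ countBound L n (lcDelete σ t x) := by
  cases h : σ x with
  | none => simp [lcDelete, h]
  | some p =>
    obtain ⟨f, Δ⟩ := p
    by_cases hdel : f + Δ ≤ t
    · simpa [lcDelete, h, hdel, countBound] using hdel.trans ht
    · simp [lcDelete, h, hdel]

/-- A new tuple `(1, t - 1)` inherits the bound `n / L = t - 1` of an absent item; a tuple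
deleted at the end of epoch `t` had `f + Δ ≤ t`, and `t` is then the number of completed
epochs. -/
lemma countBound_step (σ : α → Option (ℕ × ℕ)) {L : ℕ} (hL : 0 < L) (n : ℕ) (e x : α) :
    let t := (n + 1 + L - 1) / L
    let σ' := lcInsert σ t e
    countBound L n (σ x) + (if e = x then 1 else 0) ≤
      countBound L (n + 1) ((if (n + 1) % L = 0 then lcDelete σ' t else σ') x) := by
  have ht : (n + 1 + L - 1) / L = n / L + 1 := by
    rw [show n + 1 + L - 1 = n + L by omega, Nat.add_div_right n hL]
  have hinsert : countBound L n (σ x) + (if e = x then 1 else 0) ≤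
      countBound L (n + 1) (lcInsert σ (n / L + 1) e x) := by
    refine le_trans ?_ (countBound_mono n.le_succ _)
    split_ifs with he
    · subst he; exact countBound_lcInsert_self σ L n e
    · rw [lcInsert_of_ne σ _ (Ne.symm he), add_zero]
  simp only [ht]
  by_cases hend : (n + 1) % L = 0
  · rw [if_pos hend]
    have hepoch : n / L + 1 ≤ (n + 1) / L :=
      (Nat.succ_div_of_dvd (Nat.dvd_of_mod_eq_zero hend)).ge
    exact hinsert.trans (countBound_le_lcDelete _ hepoch x)
  · rwa [if_neg hend]

lemma count_add_le_countBound_lcAux {L : ℕ} (hL : 0 < L) (x : α) (s : List α) {n c : ℕ}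
    {σ : α → Option (ℕ × ℕ)} (hc : c ≤ countBound L n (σ x)) :
    c + s.count x ≤ countBound L (n + s.length) (lcAux L s n σ x) := by
  induction s generalizing n c σ with
  | nil => simpa [lcAux] using hc
  | cons e rest ih =>
    have hrest := ih ((Nat.add_le_add_right hc _).trans (countBound_step σ hL n e x))
    rw [lcAux, List.count_cons, List.length_cons, ← add_assoc n, Nat.add_right_comm n]
    simp only [beq_iff_eq] at hrest ⊢
    omega

lemma count_le_countBound_lcState {L : ℕ} (hL : 0 < L) (s : List α) (x : α) :
    s.count x ≤ countBound L s.length (lcState L s x) := by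
  simpa [lcState] using count_add_le_countBound_lcAux hL x s (n := 0) (σ := fun _ => none) (Nat.zero_le _)

lemma natCast_div_ceil_one_div_le {ε : ℝ} (hε : 0 < ε) (N : ℕ) :
    ((N / ⌈1 / ε⌉₊ : ℕ) : ℝ) ≤ ε * N := by
  have hεL : 1 ≤ ε * ⌈1 / ε⌉₊ := by
    have := Nat.le_ceil (1 / ε)
    rwa [div_le_iff₀ hε, mul_comm] at this
  have hL : (0 : ℝ) < ⌈1 / ε⌉₊ := by positivity
  calc ((N / ⌈1 / ε⌉₊ : ℕ) : ℝ) ≤ N / ⌈1 / ε⌉₊ := Nat.cast_div_le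
    _ ≤ ε * N := by
      rw [div_le_iff₀ hL]
      nlinarith [N.cast_nonneg (α := ℝ)]

theorem lossy_counting_completeness_general (ε : ℝ) (hε : 0 < ε)
    (s : List α) (e : α)
    (hc : ε * s.length < (s.count e : ℝ)) :
    (lcState ⌈1 / ε⌉₊ s e).isSome := by
  have hL : 0 < ⌈1 / ε⌉₊ := Nat.ceil_pos.mpr (by positivity)
  rw [Option.isSome_iff_ne_none]
  intro habsent
  have hcount := count_le_countBound_lcState hL s e
  rw [habsent, countBound] at hcount
  have := natCast_div_ceil_one_div_le hε s.length
  have : (s.count e : ℝ) ≤ (s.length / ⌈1 / ε⌉₊ : ℕ) := by exact_mod_cast hcount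
  linarith

/-- **Lossy counting completeness**: every item whose true frequency exceeds `ε N`
still has a tuple in the data structure after the `N = s.length` stream elements. -/
theorem lossy_counting_completeness (ε : ℝ) (hε : 0 < ε) (hε1 : ε ≤ 1)
    (s : List α) (e : α)
    (hc : ε * s.length < (s.count e : ℝ)) :
    (lcState ⌈1 / ε⌉₊ s e).isSome :=
  lossy_counting_completeness_general ε hε s e hc
end

section
/- The weighted streaming label approximation is bounded: for any node u, letting y_l be the exact un-normalized aggregated label weight y_l = Σ_{i} w_i p_{i,l} over neighbors i=1..d with edge weights w_i and label probabilities p_{i,l}, and ŷ_l the estimate maintained by the weighted lossy-counting procedure with threshold δ, the estimate satisfies ŷ_l ≤ y_l ≤ ŷ_l + δ · Σ_{i=1}^{d} w_i for every label l (where ŷ_l = 0 if label l was deleted). -/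
/-!  Weighted lossy counting for label streams: a node receives from its `t`-th
neighbor a probability vector `p` with edge weight `w`.  The maintained tuples
`(f, Δ)` satisfy: if a label is present its weight is incremented by `w * p l`,
otherwise the tuple `(w * p l, δ * Σ_{i<t} w_i)` is created; after processing
neighbor `t`, tuples with `f + Δ ≤ δ * Σ_{i≤t} w_i` are deleted. -/

variable {β : Type*}

/-- Insert/increment step for the message `(w, p)`; `Δ₀` is the error assigned
to newly created tuples. -/
noncomputable def wInsert (Δ₀ : ℝ) (σ : β → Option (ℝ × ℝ)) (w : ℝ) (p : β → ℝ) :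
    β → Option (ℝ × ℝ) := fun l =>
  match σ l with
  | some (f, Δ) => some (f + w * p l, Δ)
  | none => some (w * p l, Δ₀)

/-- Deletion step: remove all tuples with `f + Δ ≤ thr`. -/
noncomputable def wDelete (thr : ℝ) (σ : β → Option (ℝ × ℝ)) : β → Option (ℝ × ℝ) := fun l =>
  match σ l with
  | some (f, Δ) => if f + Δ ≤ thr then none else some (f, Δ)
  | none => none

/-- Run the weighted streaming algorithm over the list of messages `(w_t, p_t)`;
`W` is the accumulated weight `Σ_{i<t} w_i` so far. -/
noncomputable def wRun (δ : ℝ) : List (ℝ × (β → ℝ)) → ℝ → (β → Option (ℝ × ℝ)) →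
    (β → Option (ℝ × ℝ))
  | [], _, σ => σ
  | (w, p) :: rest, W, σ =>
    wRun δ rest (W + w) (wDelete (δ * (W + w)) (wInsert (δ * W) σ w p))

/-- Final state after processing all neighbor messages. -/
noncomputable def wState (δ : ℝ) (msgs : List (ℝ × (β → ℝ))) : β → Option (ℝ × ℝ) :=
  wRun δ msgs 0 fun _ => none

/-- The estimate `ŷ_l`: the retained weight `f`, or `0` if the label was deleted. -/
noncomputable def wEst (δ : ℝ) (msgs : List (ℝ × (β → ℝ))) (l : β) : ℝ :=
  match wState δ msgs l with
  | some (f, _) => f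
  | none => 0

/-!
A label's slot in the state satisfies the invariant `Tracks E y`, relative to the weight `y`
the label has received so far and the error budget `E = δ * Σ_{i<t} w_i`: a retained tuple
`(f, Δ)` has `f ≤ y ≤ f + Δ` and `Δ ≤ E`, and a missing label has `y ≤ E`. Insertion
preserves it because a fresh tuple is created with `Δ = E`, which covers all weight received
while the label was missing; deletion preserves it because a deleted tuple had
`y ≤ f + Δ ≤ E`. At the end the estimate is `f` (or `0`), and the invariant gives exactly
the two bounds.
-/

def Tracks (E y : ℝ) : Option (ℝ × ℝ) → Prop
  | some (f, Δ) => f ≤ y ∧ y ≤ f + Δ ∧ Δ ≤ E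
  | none => y ≤ E

namespace Tracks

variable {E E' y : ℝ} {σ : β → Option (ℝ × ℝ)} {l : β}

theorem mono (hE : E ≤ E') : ∀ {s}, Tracks E y s → Tracks E' y s
  | some _, ⟨hf, hy, hΔ⟩ => ⟨hf, hy, hΔ.trans hE⟩
  | none, hy => hy.trans hE

theorem wInsert (hy : 0 ≤ y) (w : ℝ) (p : β → ℝ) (h : Tracks E y (σ l)) :
    Tracks E (y + w * p l) (_root_.wInsert E σ w p l) := by
  unfold _root_.wInsert
  rcases hσ : σ l with _ | ⟨f, Δ⟩ <;> rw [hσ] at h <;> simp only [Tracks] at h ⊢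
  · exact ⟨by linarith, by linarith, le_rfl⟩
  · obtain ⟨hf, hy, hΔ⟩ := h
    exact ⟨by linarith, by linarith, hΔ⟩

theorem wDelete (h : Tracks E y (σ l)) : Tracks E y (_root_.wDelete E σ l) := by
  unfold _root_.wDelete
  rcases hσ : σ l with _ | ⟨f, Δ⟩ <;> rw [hσ] at h
  · exact h
  · by_cases hdel : f + Δ ≤ E
    · simp only [hdel, if_true, Tracks]
      exact h.2.1.trans hdel
    · simpa only [hdel, if_false] using h

theorem wRun {δ : ℝ} (hδ : 0 ≤ δ) (l : β) :
    ∀ (msgs : List (ℝ × (β → ℝ))) {W y : ℝ} {σ : β → Option (ℝ × ℝ)},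
      (∀ mp ∈ msgs, 0 ≤ mp.1) → (∀ mp ∈ msgs, 0 ≤ mp.2 l) → 0 ≤ y →
      Tracks (δ * W) y (σ l) →
      Tracks (δ * (W + (msgs.map Prod.fst).sum)) (y + (msgs.map fun mp => mp.1 * mp.2 l).sum)
        (_root_.wRun δ msgs W σ l)
  | [], W, y, σ, _, _, _, h => by simpa [_root_.wRun] using h
  | (w, p) :: rest, W, y, σ, hw, hp, hy, h => by
    have hw₀ : 0 ≤ w := hw (w, p) List.mem_cons_self
    have hwp : 0 ≤ w * p l := mul_nonneg hw₀ (hp (w, p) List.mem_cons_self)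
    have hstep : Tracks (δ * (W + w)) (y + w * p l)
        (_root_.wDelete (δ * (W + w)) (_root_.wInsert (δ * W) σ w p) l) :=
      wDelete ((h.wInsert hy w p).mono (mul_le_mul_of_nonneg_left (by linarith) hδ))
    have ih := wRun hδ l rest (fun mp hm => hw mp (List.mem_cons_of_mem _ hm))
      (fun mp hm => hp mp (List.mem_cons_of_mem _ hm)) (by linarith) hstep
    simpa only [_root_.wRun, List.map_cons, List.sum_cons, add_assoc] using ih

end Tracks

/-- **Weighted streaming approximation bound**: with exact aggregated label weight
`y_l = Σ_t w_t * p_{t,l}`, the estimate satisfies `ŷ_l ≤ y_l ≤ ŷ_l + δ * Σ_t w_t`. -/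
theorem weighted_streaming_bound (δ : ℝ) (hδ : 0 ≤ δ)
    (msgs : List (ℝ × (β → ℝ)))
    (hw : ∀ mp ∈ msgs, 0 ≤ mp.1)
    (hp : ∀ mp ∈ msgs, ∀ l, 0 ≤ mp.2 l ∧ mp.2 l ≤ 1)
    (l : β) :
    wEst δ msgs l ≤ (msgs.map fun mp => mp.1 * mp.2 l).sum ∧
    (msgs.map fun mp => mp.1 * mp.2 l).sum ≤ wEst δ msgs l + δ * (msgs.map Prod.fst).sum := by
  have hp₀ : ∀ mp ∈ msgs, 0 ≤ mp.2 l := fun mp hm => (hp mp hm l).1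
  have hy : 0 ≤ (msgs.map fun mp => mp.1 * mp.2 l).sum :=
    List.sum_nonneg fun _ hx => by
      obtain ⟨mp, hm, rfl⟩ := List.mem_map.1 hx
      exact mul_nonneg (hw mp hm) (hp₀ mp hm)
  have h := Tracks.wRun hδ l msgs (W := 0) (y := 0) (σ := fun _ => none) hw hp₀ le_rfl
    (by simp [Tracks])
  rw [zero_add, zero_add] at h
  unfold wEst wState
  rcases hs : _root_.wRun δ msgs 0 (fun _ => none) l with _ | ⟨f, Δ⟩ <;>
    rw [hs] at h <;> simp only [Tracks] at h ⊢
  · exact ⟨hy, by linarith⟩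
  · exact ⟨h.1, by linarith⟩
end

section
/- The Jacobi iteration map for the SSL update is a contraction in the sup norm with contraction factor max_v (μ₂ W_v)/(μ₁ s_{vv} + μ₂ W_v + μ₃) < 1, where W_v = Σ_{u∈N(v)} w_{vu}, provided μ₃ > 0; hence the iteration converges to a unique fixed point from any initialization. -/
/-- **The Jacobi iteration map is a sup-norm contraction** with factor
`ρ = max_v (μ₂ W_v)/(μ₁ s_{vv} + μ₂ W_v + μ₃) < 1` where `W_v = Σ_{u∈N(v)} w_{vu}`,
provided `μ₃ > 0`; hence the iteration has a unique fixed point and converges to it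
from any initialization.  (Here `ℝ^{n×m}` carries the sup norm of the Pi type.) -/
theorem jacobi_iteration_contraction {V : Type*} [Fintype V] [Nonempty V] {m : ℕ}
    (μ1 μ2 μ3 : ℝ) (h1 : 0 ≤ μ1) (h2 : 0 ≤ μ2) (h3 : 0 < μ3)
    (s : V → ℝ) (hs : ∀ v, 0 ≤ s v)
    (N : V → Finset V) (w : V → V → ℝ) (hw : ∀ v u, 0 ≤ w v u)
    (Y : V → Fin m → ℝ) (U : Fin m → ℝ)
    (T : (V → Fin m → ℝ) → (V → Fin m → ℝ))
    (hT : ∀ X v l, T X v l =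
      (μ1 * s v * Y v l + μ2 * (∑ u ∈ N v, w v u * X u l) + μ3 * U l) /
        (μ1 * s v + μ2 * ∑ u ∈ N v, w v u + μ3))
    (ρ : ℝ)
    (hρ : ρ = Finset.univ.sup' Finset.univ_nonempty (fun v =>
      (μ2 * ∑ u ∈ N v, w v u) / (μ1 * s v + μ2 * ∑ u ∈ N v, w v u + μ3))) :
    ρ < 1 ∧
    (∀ X Z : V → Fin m → ℝ, ‖T X - T Z‖ ≤ ρ * ‖X - Z‖) ∧
    (∃! F : V → Fin m → ℝ, T F = F) ∧
    (∀ (X₀ F : V → Fin m → ℝ), T F = F →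
      Filter.Tendsto (fun n => T^[n] X₀) Filter.atTop (nhds F)) := by
  have hWnn : ∀ v, 0 ≤ μ2 * ∑ u ∈ N v, w v u := fun v =>
    mul_nonneg h2 (Finset.sum_nonneg fun u _ => hw v u)
  have hD : ∀ v, 0 < μ1 * s v + μ2 * ∑ u ∈ N v, w v u + μ3 := fun v => by
    have := mul_nonneg h1 (hs v); linarith [hWnn v]
  have hρ1 : ρ < 1 := by
    rw [hρ, Finset.sup'_lt_iff]
    intro v _
    rw [div_lt_one (hD v)]
    have := mul_nonneg h1 (hs v); linarith
  have hρ0 : 0 ≤ ρ := by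
    obtain ⟨v⟩ := ‹Nonempty V›
    rw [hρ]
    exact le_trans (div_nonneg (hWnn v) (hD v).le)
      (Finset.le_sup' (fun v => (μ2 * ∑ u ∈ N v, w v u) /
        (μ1 * s v + μ2 * ∑ u ∈ N v, w v u + μ3)) (Finset.mem_univ v))
  have hlip : ∀ X Z : V → Fin m → ℝ, ‖T X - T Z‖ ≤ ρ * ‖X - Z‖ := by
    intro X Z
    rw [pi_norm_le_iff_of_nonneg (mul_nonneg hρ0 (norm_nonneg _))]
    intro v
    rw [pi_norm_le_iff_of_nonneg (mul_nonneg hρ0 (norm_nonneg _))]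
    intro l
    have hdiff : (T X - T Z) v l =
        (μ2 * ∑ u ∈ N v, w v u * (X u l - Z u l)) /
          (μ1 * s v + μ2 * ∑ u ∈ N v, w v u + μ3) := by
      simp only [Pi.sub_apply, hT]
      rw [div_sub_div_same]
      congr 1
      rw [Finset.mul_sum, Finset.mul_sum, Finset.mul_sum]
      have hsum : ∑ i ∈ N v, μ2 * (w v i * X i l) - ∑ i ∈ N v, μ2 * (w v i * Z i l)
          = ∑ i ∈ N v, μ2 * (w v i * (X i l - Z i l)) := by
        rw [← Finset.sum_sub_distrib]
        exact Finset.sum_congr rfl fun i _ => by ring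
      linarith [hsum]
    rw [Real.norm_eq_abs, hdiff, abs_div, abs_of_pos (hD v)]
    have key : |μ2 * ∑ u ∈ N v, w v u * (X u l - Z u l)| ≤
        (μ2 * ∑ u ∈ N v, w v u) * ‖X - Z‖ := by
      rw [abs_mul, abs_of_nonneg h2, mul_assoc]
      refine mul_le_mul_of_nonneg_left ?_ h2
      calc |∑ u ∈ N v, w v u * (X u l - Z u l)|
          ≤ ∑ u ∈ N v, |w v u * (X u l - Z u l)| := Finset.abs_sum_le_sum_abs _ _
        _ ≤ ∑ u ∈ N v, w v u * ‖X - Z‖ := by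
            refine Finset.sum_le_sum fun u _ => ?_
            rw [abs_mul, abs_of_nonneg (hw v u)]
            refine mul_le_mul_of_nonneg_left ?_ (hw v u)
            calc |X u l - Z u l| = ‖(X - Z) u l‖ := by simp [Real.norm_eq_abs]
              _ ≤ ‖(X - Z) u‖ := norm_le_pi_norm _ l
              _ ≤ ‖X - Z‖ := norm_le_pi_norm _ u
        _ = (∑ u ∈ N v, w v u) * ‖X - Z‖ := by rw [Finset.sum_mul]
    calc |μ2 * ∑ u ∈ N v, w v u * (X u l - Z u l)| /
          (μ1 * s v + μ2 * ∑ u ∈ N v, w v u + μ3)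
        ≤ (μ2 * ∑ u ∈ N v, w v u) * ‖X - Z‖ /
          (μ1 * s v + μ2 * ∑ u ∈ N v, w v u + μ3) :=
          by have := (hD v).le; gcongr
      _ = ((μ2 * ∑ u ∈ N v, w v u) / (μ1 * s v + μ2 * ∑ u ∈ N v, w v u + μ3)) *
            ‖X - Z‖ := by ring
      _ ≤ ρ * ‖X - Z‖ := by
          refine mul_le_mul_of_nonneg_right ?_ (norm_nonneg _)
          rw [hρ]
          exact Finset.le_sup' (fun v => (μ2 * ∑ u ∈ N v, w v u) /
            (μ1 * s v + μ2 * ∑ u ∈ N v, w v u + μ3)) (Finset.mem_univ v)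
  set K : NNReal := ⟨ρ, hρ0⟩ with hK
  have hK1 : K < 1 := by exact_mod_cast hρ1
  have hlipK : LipschitzWith K T := by
    refine LipschitzWith.of_dist_le_mul fun X Z => ?_
    rw [dist_eq_norm, dist_eq_norm]
    exact hlip X Z
  have hC : ContractingWith K T := ⟨hK1, hlipK⟩
  refine ⟨hρ1, hlip, ?_, ?_⟩
  · exact ⟨hC.fixedPoint T, hC.fixedPoint_isFixedPt,
      fun F hF => hC.fixedPoint_unique hF⟩
  · intro X₀ F hF
    have := hC.fixedPoint_unique (x := F) hF
    rw [this]
    exact hC.tendsto_iterate_fixedPoint X₀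
end

section
/- For the Count-Min sketch with width w and depth d, for any item i the estimate â_i satisfies a_i ≤ â_i always, and â_i ≤ a_i + (e/w)‖a‖₁ with probability at least 1 − e^{−d}, where a is the nonnegative frequency vector. -/
/-!
In every row the counter of the bucket of `i₀` is `a i₀` plus the weight of the other items
hashed to the same bucket, so the estimate never undercounts. By pairwise independence each other
item collides with `i₀` with probability `1 / w`, so this excess has expectation at most `‖a‖₁ / w`,
and by Markov's inequality it exceeds `e ‖a‖₁ / w` with probability at most `1 / e`. The rows are
independent, so all `d` of them exceed it with probability at most `e ^ (-d)`, and otherwise the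
minimum over the rows is within `e ‖a‖₁ / w` of `a i₀`.
-/

open MeasureTheory ProbabilityTheory Finset

theorem MeasureTheory.ofReal_one_sub_le_measure_of_compl_subset {Ω : Type*}
    [MeasurableSpace Ω] {μ : Measure Ω} [IsProbabilityMeasure μ] {s t : Set Ω} (hst : sᶜ ⊆ t)
    {q : ℝ} (hq : 0 ≤ q) (hs : μ s ≤ ENNReal.ofReal q) : ENNReal.ofReal (1 - q) ≤ μ t := by
  have hcover : 1 ≤ μ s + μ t :=
    calc 1 = μ (s ∪ sᶜ) := by rw [Set.union_compl_self, measure_univ]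
      _ ≤ μ s + μ t := (measure_union_le s sᶜ).trans (add_le_add_right (measure_mono hst) _)
  calc ENNReal.ofReal (1 - q) = 1 - ENNReal.ofReal q := by
        rw [ENNReal.ofReal_sub _ hq, ENNReal.ofReal_one]
    _ ≤ 1 - μ s := tsub_le_tsub_left hs 1
    _ ≤ μ t := tsub_le_iff_left.2 hcover

theorem ProbabilityTheory.iIndepFun.measure_iInter_preimage_le_pow {Ω ι γ : Type*}
    [MeasurableSpace Ω] {μ : Measure Ω} [Fintype ι] [MeasurableSpace γ] {g : ι → Ω → γ}
    (hg : iIndepFun g μ) {s : ι → Set γ} (hs : ∀ j, MeasurableSet (s j)) {p : ENNReal}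
    (hp : ∀ j, μ (g j ⁻¹' s j) ≤ p) : μ (⋂ j, g j ⁻¹' s j) ≤ p ^ Fintype.card ι := by
  rw [hg.meas_iInter fun j => ⟨s j, hs j, rfl⟩]
  calc ∏ j, μ (g j ⁻¹' s j) ≤ ∏ _j : ι, p := prod_le_prod' fun j _ => hp j
    _ = p ^ Fintype.card ι := by rw [prod_const, card_univ]

namespace CountMin

variable {Ω α β : Type*} [MeasurableSpace Ω] {μ : Measure Ω}

theorem measure_setOf_eq_eq_inv_card [Fintype β] [Nonempty β] [MeasurableSpace β]
    [MeasurableSingletonClass β] {X Y : Ω → β} (hX : Measurable X) (hY : Measurable Y)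
    (hpair : ∀ b, μ {ω | X ω = b ∧ Y ω = b} =
      ((Fintype.card β : ENNReal) * Fintype.card β)⁻¹) :
    μ {ω | X ω = Y ω} = (Fintype.card β : ENNReal)⁻¹ := by
  have hunion : {ω | X ω = Y ω} = ⋃ b, {ω | X ω = b ∧ Y ω = b} := by
    ext ω
    simp only [Set.mem_ofPred_eq, Set.mem_iUnion]
    exact ⟨fun h => ⟨Y ω, h, rfl⟩, fun ⟨b, h, h'⟩ => h.trans h'.symm⟩
  have hcard : (Fintype.card β : ENNReal) ≠ 0 := by simp
  rw [hunion, measure_iUnion, tsum_fintype]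
  · simp only [hpair, sum_const, card_univ, nsmul_eq_mul]
    rw [ENNReal.mul_inv (.inl hcard) (.inl (by simp)), ← mul_assoc,
      ENNReal.mul_inv_cancel hcard (by simp), one_mul]
  · exact fun b b' hb => Set.disjoint_left.2 fun ω h h' => hb (h.1.symm.trans h'.1)
  · exact fun b => (hX (measurableSet_singleton b)).inter (hY (measurableSet_singleton b))

variable [Fintype α] [DecidableEq β]

theorem le_inf'_sum_filter {ι : Type*} {s : Finset ι} (hs : s.Nonempty) {a : α → ℝ}
    (ha : ∀ i, 0 ≤ a i) (i₀ : α) (g : ι → α → β) :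
    a i₀ ≤ s.inf' hs fun j => ∑ i with g j i = g j i₀, a i :=
  le_inf' _ _ fun _ _ => single_le_sum (fun i _ => ha i) (mem_filter.2 ⟨mem_univ _, rfl⟩)

variable [DecidableEq α]

/-- The overcount `C[j][h_j(i₀)] - a i₀` of a row whose hash function is `g`. -/
def excess (a : α → ℝ) (i₀ : α) (g : α → β) : ℝ :=
  ∑ i ∈ univ.erase i₀, if g i = g i₀ then a i else 0

theorem sum_filter_apply_eq_eq_add_excess (a : α → ℝ) (i₀ : α) (g : α → β) :
    ∑ i with g i = g i₀, a i = a i₀ + excess a i₀ g := by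
  rw [sum_filter, ← add_sum_erase _ _ (mem_univ i₀), if_pos rfl, excess]

theorem excess_le_sum {a : α → ℝ} (ha : ∀ i, 0 ≤ a i) (i₀ : α) (g : α → β) :
    excess a i₀ g ≤ ∑ i, a i :=
  calc excess a i₀ g ≤ ∑ i ∈ univ.erase i₀, a i :=
        sum_le_sum fun i _ => by split_ifs <;> simp [ha i]
    _ ≤ ∑ i, a i := sum_le_sum_of_subset_of_nonneg (subset_univ _) fun i _ _ => ha i

theorem inf'_sum_filter_le_add_excess {ι : Type*} {s : Finset ι} (hs : s.Nonempty)
    (a : α → ℝ) (i₀ : α) (g : ι → α → β) {j : ι} (hj : j ∈ s) :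
    (s.inf' hs fun j => ∑ i with g j i = g j i₀, a i) ≤ a i₀ + excess a i₀ (g j) :=
  (inf'_le _ hj).trans_eq (sum_filter_apply_eq_eq_add_excess a i₀ (g j))

variable [Fintype β] [MeasurableSpace β] [MeasurableSingletonClass β]

theorem lintegral_ofReal_excess {h : Ω → α → β} (hh : Measurable h) {a : α → ℝ}
    (ha : ∀ i, 0 ≤ a i) {i₀ : α}
    (hcoll : ∀ i ≠ i₀, μ {ω | h ω i = h ω i₀} = (Fintype.card β : ENNReal)⁻¹) :
    ∫⁻ ω, ENNReal.ofReal (excess a i₀ (h ω)) ∂μ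
      = (∑ i ∈ univ.erase i₀, ENNReal.ofReal (a i)) / Fintype.card β := by
  have hmeas : ∀ i, MeasurableSet {ω | h ω i = h ω i₀} :=
    fun i => hh (.of_discrete : MeasurableSet {f : α → β | f i = f i₀})
  have hterm : ∀ ω i, ENNReal.ofReal (if h ω i = h ω i₀ then a i else 0)
      = {ω | h ω i = h ω i₀}.indicator (fun _ => ENNReal.ofReal (a i)) ω := by
    intro ω i
    by_cases hc : h ω i = h ω i₀ <;> simp [hc]
  simp_rw [excess, ENNReal.ofReal_sum_of_nonneg (fun i _ => ite_nonneg (ha i) le_rfl), hterm]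
  rw [lintegral_finsetSum _ fun i _ => measurable_const.indicator (hmeas i), div_eq_mul_inv,
    sum_mul]
  refine sum_congr rfl fun i hi => ?_
  rw [lintegral_indicator_const (hmeas i), hcoll i (ne_of_mem_erase hi)]

theorem measure_excess_gt_le [Nonempty β] {h : Ω → α → β} (hh : Measurable h) {a : α → ℝ}
    (ha : ∀ i, 0 ≤ a i) {i₀ : α}
    (hcoll : ∀ i ≠ i₀, μ {ω | h ω i = h ω i₀} = (Fintype.card β : ENNReal)⁻¹)
    {c : ℝ} (hc : 0 < c) :
    μ {ω | c / Fintype.card β * ∑ i, a i < excess a i₀ (h ω)} ≤ ENNReal.ofReal c⁻¹ := by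
  have hβ : (0 : ℝ) < Fintype.card β := by exact_mod_cast Fintype.card_pos
  have hX : Measurable fun ω => excess a i₀ (h ω) :=
    (Measurable.of_discrete (f := excess a i₀)).comp hh
  rcases (sum_nonneg fun i _ => ha i : 0 ≤ ∑ i, a i).eq_or_lt with hS | hS
  · have hempty : {ω | c / Fintype.card β * ∑ i, a i < excess a i₀ (h ω)} = ∅ :=
      Set.eq_empty_of_forall_notMem fun ω hω => by
        have := excess_le_sum ha i₀ (h ω)
        rw [Set.mem_ofPred_eq, ← hS, mul_zero] at hω
        linarith
    simp [hempty]
  set t := c / Fintype.card β * ∑ i, a i with ht_def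
  have ht : 0 < t := by positivity
  calc μ {ω | t < excess a i₀ (h ω)}
      ≤ μ {ω | ENNReal.ofReal t ≤ ENNReal.ofReal (excess a i₀ (h ω))} :=
        measure_mono fun ω hω => ENNReal.ofReal_le_ofReal hω.le
    _ ≤ (∫⁻ ω, ENNReal.ofReal (excess a i₀ (h ω)) ∂μ) / ENNReal.ofReal t :=
        meas_ge_le_lintegral_div hX.ennreal_ofReal.aemeasurable
          (ENNReal.ofReal_pos.2 ht).ne' ENNReal.ofReal_ne_top
    _ ≤ ENNReal.ofReal (∑ i, a i) / Fintype.card β / ENNReal.ofReal t := by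
        rw [lintegral_ofReal_excess hh ha hcoll, ENNReal.ofReal_sum_of_nonneg fun i _ => ha i]
        gcongr
        exact subset_univ _
    _ = ENNReal.ofReal c⁻¹ := by
        rw [← ENNReal.ofReal_natCast, ← ENNReal.ofReal_div_of_pos hβ,
          ← ENNReal.ofReal_div_of_pos ht, ht_def]
        congr 1
        field_simp

end CountMin

theorem count_min_sketch_guarantee_general {Ω : Type*} [MeasurableSpace Ω]
    (μ : Measure Ω) [IsProbabilityMeasure μ]
    {m w d : ℕ} (hw : 0 < w) (hd : 0 < d)
    (H : Ω → Fin d → Fin m → Fin w) (hmeas : Measurable H)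
    (hpair : ∀ (j : Fin d) (i i' : Fin m) (b b' : Fin w), i ≠ i' →
      μ {ω | H ω j i = b ∧ H ω j i' = b'} = ((w : ENNReal) * w)⁻¹)
    (hindep : iIndepFun (fun j ω => H ω j) μ)
    (a : Fin m → ℝ) (ha : ∀ i, 0 ≤ a i) (i₀ : Fin m)
    (est : Ω → ℝ)
    (hest : ∀ ω, est ω = Finset.univ.inf' ⟨⟨0, hd⟩, Finset.mem_univ _⟩
      (fun j : Fin d => ∑ i ∈ Finset.univ.filter (fun i => H ω j i = H ω j i₀), a i)) :
    (∀ ω, a i₀ ≤ est ω) ∧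
    ENNReal.ofReal (1 - Real.exp (-(d : ℝ))) ≤
      μ {ω | est ω ≤ a i₀ + (Real.exp 1 / w) * ∑ i, a i} := by
  have : Nonempty (Fin w) := Fin.pos_iff_nonempty.1 hw
  have hrow : ∀ j, Measurable fun ω => H ω j := fun j => (measurable_pi_apply j).comp hmeas
  have hcoll : ∀ j, ∀ i ≠ i₀, μ {ω | H ω j i = H ω j i₀} = (Fintype.card (Fin w) : ENNReal)⁻¹ :=
    fun j i hi => CountMin.measure_setOf_eq_eq_inv_card (by fun_prop) (by fun_prop)
      fun b => by simpa using hpair j i i₀ b b hi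
  set bad : Set (Fin m → Fin w) := {g | Real.exp 1 / w * ∑ i, a i < CountMin.excess a i₀ g}
  have hall_bad : μ (⋂ j, (fun ω => H ω j) ⁻¹' bad) ≤ ENNReal.ofReal (Real.exp (-d)) :=
    calc μ (⋂ j, (fun ω => H ω j) ⁻¹' bad)
        ≤ ENNReal.ofReal (Real.exp 1)⁻¹ ^ Fintype.card (Fin d) :=
          hindep.measure_iInter_preimage_le_pow (s := fun _ => bad) (fun _ => .of_discrete)
            fun j => by
              have h := CountMin.measure_excess_gt_le (hrow j) ha (hcoll j) (Real.exp_pos 1)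
              rwa [Fintype.card_fin] at h
      _ = ENNReal.ofReal (Real.exp (-d)) := by
          rw [← ENNReal.ofReal_pow (by positivity), ← Real.exp_neg, ← Real.exp_nat_mul]
          simp
  refine ⟨fun ω => hest ω ▸ CountMin.le_inf'_sum_filter _ ha i₀ _,
    ofReal_one_sub_le_measure_of_compl_subset (fun ω hω => ?_) (Real.exp_pos _).le hall_bad⟩
  obtain ⟨j, hj⟩ : ∃ j, ¬Real.exp 1 / w * ∑ i, a i < CountMin.excess a i₀ (H ω j) := by
    simpa [bad] using hω
  rw [Set.mem_ofPred_eq, hest]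
  exact (CountMin.inf'_sum_filter_le_add_excess _ a i₀ (fun j => H ω j) (mem_univ j)).trans
    (by linarith)

/-- **Count-Min sketch guarantee**: with `d` independent hash functions
`h_j : [m] → [w]` drawn from a pairwise-independent family, counters
`C[j][b] = Σ_{i : h_j(i) = b} a_i` and estimate `â_i = min_j C[j][h_j(i)]`, for any
item `i₀` the estimate never underestimates (`a_{i₀} ≤ â_{i₀}` always), and
`â_{i₀} ≤ a_{i₀} + (e/w) ‖a‖₁` with probability at least `1 − e^{−d}`. -/
theorem count_min_sketch_guarantee {Ω : Type*} [MeasurableSpace Ω]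
    (μ : Measure Ω) [IsProbabilityMeasure μ]
    {m w d : ℕ} (hw : 0 < w) (hd : 0 < d)
    (H : Ω → Fin d → Fin m → Fin w) (hmeas : Measurable H)
    (hunif : ∀ (j : Fin d) (i : Fin m) (b : Fin w),
      μ {ω | H ω j i = b} = ((w : ENNReal))⁻¹)
    (hpair : ∀ (j : Fin d) (i i' : Fin m) (b b' : Fin w), i ≠ i' →
      μ {ω | H ω j i = b ∧ H ω j i' = b'} = ((w : ENNReal) * w)⁻¹)
    (hindep : iIndepFun (fun j ω => H ω j) μ)
    (a : Fin m → ℝ) (ha : ∀ i, 0 ≤ a i) (i₀ : Fin m)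
    (est : Ω → ℝ)
    (hest : ∀ ω, est ω = Finset.univ.inf' ⟨⟨0, hd⟩, Finset.mem_univ _⟩
      (fun j : Fin d => ∑ i ∈ Finset.univ.filter (fun i => H ω j i = H ω j i₀), a i)) :
    (∀ ω, a i₀ ≤ est ω) ∧
    ENNReal.ofReal (1 - Real.exp (-(d : ℝ))) ≤
      μ {ω | est ω ≤ a i₀ + (Real.exp 1 / w) * ∑ i, a i} :=
  count_min_sketch_guarantee_general μ hw hd H hmeas hpair hindep a ha i₀ est hest
end

section
/- The fixed point of the Jacobi iteration (with symmetric weights) equals the unique minimizer of the strictly convex SSL objective: if Ŷ* satisfies Ŷ*_{vl} = (μ₁ s_{vv} Y_{vl} + 2μ₂ Σ_{u∈N(v)} w_{vu} Ŷ*_{ul} + μ₃ U_l)/(μ₁ s_{vv} + 2μ₂ Σ_u w_{vu} + μ₃) for all v, l, then Ŷ* minimizes C over ℝ^{n×m}. -/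
lemma sum_sq_expand {ι : Type*} (n : Finset ι) (f g d : ι → ℝ) (h : ∀ i, f i = g i + d i) :
    ∑ i ∈ n, f i ^ 2
      = ∑ i ∈ n, g i ^ 2 + 2 * ∑ i ∈ n, g i * d i + ∑ i ∈ n, d i ^ 2 := by
  have h0 : ∑ i ∈ n, f i ^ 2
      = ∑ i ∈ n, (g i ^ 2 + (2 * (g i * d i) + d i ^ 2)) :=
    Finset.sum_congr rfl fun i _ => by rw [h i]; ring
  rw [h0, Finset.sum_add_distrib, Finset.sum_add_distrib, Finset.mul_sum]
  ring

lemma weighted_sq_expand {ι κ : Type*} (t : Finset ι) (r : Finset κ) (c : ι → ℝ)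
    (f g d : ι → κ → ℝ) (h : ∀ i l, f i l = g i l + d i l) :
    ∑ i ∈ t, c i * ∑ l ∈ r, f i l ^ 2
      = ∑ i ∈ t, c i * ∑ l ∈ r, g i l ^ 2
        + 2 * ∑ i ∈ t, c i * ∑ l ∈ r, g i l * d i l
        + ∑ i ∈ t, c i * ∑ l ∈ r, d i l ^ 2 := by
  have h0 : ∑ i ∈ t, c i * ∑ l ∈ r, f i l ^ 2
      = ∑ i ∈ t, (c i * ∑ l ∈ r, g i l ^ 2
          + (2 * (c i * ∑ l ∈ r, g i l * d i l) + c i * ∑ l ∈ r, d i l ^ 2)) :=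
    Finset.sum_congr rfl fun i _ => by
      rw [sum_sq_expand r (f i) (g i) (d i) (h i)]; ring
  rw [h0, Finset.sum_add_distrib, Finset.sum_add_distrib, Finset.mul_sum]
  ring

/-- **The fixed point of the Jacobi iteration minimizes the SSL objective**: with
symmetric weights and neighborhoods, `μ₁, μ₂ ≥ 0`, `μ₃ > 0`, if `Ŷ*` satisfies
`Ŷ*_{vl} = (μ₁ s_{vv} Y_{vl} + 2 μ₂ Σ_{u∈N(v)} w_{vu} Ŷ*_{ul} + μ₃ U_l) /
(μ₁ s_{vv} + 2 μ₂ Σ_{u∈N(v)} w_{vu} + μ₃)` for all `v, l`, then `Ŷ*` is a global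
minimizer of `C` over `ℝ^{n×m}`. -/
theorem jacobi_fixed_point_minimizes {V : Type*} [Fintype V] {m : ℕ}
    (μ1 μ2 μ3 : ℝ) (h1 : 0 ≤ μ1) (h2 : 0 ≤ μ2) (h3 : 0 < μ3)
    (s : V → ℝ) (hs : ∀ v, 0 ≤ s v)
    (N : V → Finset V) (w : V → V → ℝ) (hw : ∀ v u, 0 ≤ w v u)
    (hsymw : ∀ u v, w u v = w v u) (hsymN : ∀ u v, u ∈ N v ↔ v ∈ N u)
    (Y : V → Fin m → ℝ) (U : Fin m → ℝ)
    (C : (V → Fin m → ℝ) → ℝ)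
    (hC : C = fun Yh : V → Fin m → ℝ =>
      μ1 * ∑ v, s v * ∑ l, (Yh v l - Y v l) ^ 2 +
      μ2 * ∑ v, ∑ u ∈ N v, w v u * ∑ l, (Yh v l - Yh u l) ^ 2 +
      μ3 * ∑ v, ∑ l, (Yh v l - U l) ^ 2)
    (Ystar : V → Fin m → ℝ)
    (hfix : ∀ v l, Ystar v l =
      (μ1 * s v * Y v l + 2 * μ2 * (∑ u ∈ N v, w v u * Ystar u l) + μ3 * U l) /
        (μ1 * s v + 2 * μ2 * ∑ u ∈ N v, w v u + μ3)) :
    ∀ Z : V → Fin m → ℝ, C Ystar ≤ C Z := by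
  classical
  subst hC
  intro Z
  simp only []
  set D : V → Fin m → ℝ := fun v l => Z v l - Ystar v l with hDdef
  have hZ : ∀ v l, Z v l = Ystar v l + D v l := fun v l => by simp [hDdef]
  -- gradient vanishes at the fixed point
  have grad : ∀ v l,
      μ1 * s v * (Ystar v l - Y v l)
        + 2 * μ2 * ∑ u ∈ N v, w v u * (Ystar v l - Ystar u l)
        + μ3 * (Ystar v l - U l) = 0 := by
    intro v l
    have hwsum : (0:ℝ) ≤ ∑ u ∈ N v, w v u := Finset.sum_nonneg fun u _ => hw v u
    have hden : (0:ℝ) < μ1 * s v + 2 * μ2 * ∑ u ∈ N v, w v u + μ3 := by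
      have := mul_nonneg h1 (hs v)
      have := mul_nonneg h2 hwsum
      nlinarith
    have heq := (eq_div_iff hden.ne').mp (hfix v l)
    have hsum : ∑ u ∈ N v, w v u * (Ystar v l - Ystar u l)
        = (∑ u ∈ N v, w v u) * Ystar v l - ∑ u ∈ N v, w v u * Ystar u l := by
      rw [Finset.sum_mul, ← Finset.sum_sub_distrib]
      exact Finset.sum_congr rfl fun u _ => by ring
    rw [hsum]
    linear_combination heq
  -- symmetry swap for double sums over neighborhoods
  have hswap : ∀ F : V → V → ℝ,
      ∑ v, ∑ u ∈ N v, F v u = ∑ v, ∑ u ∈ N v, F u v := by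
    intro F
    have key : ∀ G : V → V → ℝ, ∑ v, ∑ u ∈ N v, G v u
        = ∑ v : V, ∑ u : V, if u ∈ N v then G v u else 0 := by
      intro G
      refine Finset.sum_congr rfl fun v _ => ?_
      rw [Finset.sum_ite_mem, Finset.univ_inter]
    rw [key F, key fun v u => F u v, Finset.sum_comm]
    exact Finset.sum_congr rfl fun v _ => Finset.sum_congr rfl fun u _ =>
      if_congr (hsymN v u) rfl rfl
  -- cross term simplification
  have hcross : ∑ v, ∑ u ∈ N v, w v u * ∑ l, (Ystar v l - Ystar u l) * (D v l - D u l)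
      = 2 * ∑ v, ∑ u ∈ N v, w v u * ∑ l, (Ystar v l - Ystar u l) * D v l := by
    have hsplit : ∑ v, ∑ u ∈ N v, w v u * ∑ l, (Ystar v l - Ystar u l) * (D v l - D u l)
        = ∑ v, ∑ u ∈ N v, w v u * ∑ l, (Ystar v l - Ystar u l) * D v l
          - ∑ v, ∑ u ∈ N v, w v u * ∑ l, (Ystar v l - Ystar u l) * D u l := by
      rw [← Finset.sum_sub_distrib]
      refine Finset.sum_congr rfl fun v _ => ?_
      rw [← Finset.sum_sub_distrib]
      refine Finset.sum_congr rfl fun u _ => ?_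
      rw [← mul_sub, ← Finset.sum_sub_distrib]
      congr 1
      exact Finset.sum_congr rfl fun l _ => by ring
    have hneg : ∑ v, ∑ u ∈ N v, w v u * ∑ l, (Ystar v l - Ystar u l) * D u l
        = - ∑ v, ∑ u ∈ N v, w v u * ∑ l, (Ystar v l - Ystar u l) * D v l := by
      rw [hswap (fun v u => w v u * ∑ l, (Ystar v l - Ystar u l) * D u l)]
      rw [← Finset.sum_neg_distrib]
      refine Finset.sum_congr rfl fun v _ => ?_
      rw [← Finset.sum_neg_distrib]
      refine Finset.sum_congr rfl fun u _ => ?_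
      have hl : ∑ l, (Ystar u l - Ystar v l) * D v l
          = - ∑ l, (Ystar v l - Ystar u l) * D v l := by
        rw [← Finset.sum_neg_distrib]
        exact Finset.sum_congr rfl fun l _ => by ring
      rw [hsymw u v, hl]
      ring
    rw [hsplit, hneg]
    ring
  -- pushing scalars inside: the three linear pieces
  have t1 : μ1 * ∑ v, s v * ∑ l, (Ystar v l - Y v l) * D v l
      = ∑ v : V, ∑ l, (μ1 * s v * (Ystar v l - Y v l)) * D v l := by
    simp only [Finset.mul_sum]
    exact Finset.sum_congr rfl fun v _ => Finset.sum_congr rfl fun l _ => by ring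
  have t2 : 2 * μ2 * ∑ v, ∑ u ∈ N v, w v u * ∑ l, (Ystar v l - Ystar u l) * D v l
      = ∑ v : V, ∑ l, (2 * μ2 * ∑ u ∈ N v, w v u * (Ystar v l - Ystar u l)) * D v l := by
    simp only [Finset.mul_sum, Finset.sum_mul]
    refine Finset.sum_congr rfl fun v _ => ?_
    rw [Finset.sum_comm]
    exact Finset.sum_congr rfl fun u _ => Finset.sum_congr rfl fun l _ => by ring
  have t3 : μ3 * ∑ v : V, ∑ l, (Ystar v l - U l) * D v l
      = ∑ v : V, ∑ l, (μ3 * (Ystar v l - U l)) * D v l := by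
    simp only [Finset.mul_sum]
    exact Finset.sum_congr rfl fun v _ => Finset.sum_congr rfl fun l _ => by ring
  -- total linear term vanishes
  have hL : μ1 * ∑ v, s v * ∑ l, (Ystar v l - Y v l) * D v l
      + 2 * μ2 * ∑ v, ∑ u ∈ N v, w v u * ∑ l, (Ystar v l - Ystar u l) * D v l
      + μ3 * ∑ v : V, ∑ l, (Ystar v l - U l) * D v l = 0 := by
    rw [t1, t2, t3, ← Finset.sum_add_distrib, ← Finset.sum_add_distrib]
    refine Finset.sum_eq_zero fun v _ => ?_
    rw [← Finset.sum_add_distrib, ← Finset.sum_add_distrib]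
    refine Finset.sum_eq_zero fun l _ => ?_
    linear_combination D v l * grad v l
  -- expansions of the three quadratic pieces
  have e1 : ∑ v, s v * ∑ l, (Z v l - Y v l) ^ 2
      = ∑ v, s v * ∑ l, (Ystar v l - Y v l) ^ 2
        + 2 * ∑ v, s v * ∑ l, (Ystar v l - Y v l) * D v l
        + ∑ v, s v * ∑ l, D v l ^ 2 :=
    weighted_sq_expand Finset.univ Finset.univ s
      (fun v l => Z v l - Y v l) (fun v l => Ystar v l - Y v l) (fun v l => D v l)
      (fun v l => by show Z v l - Y v l = (Ystar v l - Y v l) + D v l; rw [hZ v l]; ring)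
  have e3' : ∑ v : V, ∑ l, (Z v l - U l) ^ 2
      = ∑ v : V, ∑ l, (Ystar v l - U l) ^ 2
        + 2 * ∑ v : V, ∑ l, (Ystar v l - U l) * D v l
        + ∑ v : V, ∑ l, D v l ^ 2 := by
    have := weighted_sq_expand (Finset.univ : Finset V) (Finset.univ : Finset (Fin m))
      (fun _ => (1:ℝ))
      (fun v l => Z v l - U l) (fun v l => Ystar v l - U l) (fun v l => D v l)
      (fun v l => by show Z v l - U l = (Ystar v l - U l) + D v l; rw [hZ v l]; ring)
    simpa using this
  have e2 : ∑ v, ∑ u ∈ N v, w v u * ∑ l, (Z v l - Z u l) ^ 2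
      = ∑ v, ∑ u ∈ N v, w v u * ∑ l, (Ystar v l - Ystar u l) ^ 2
        + 2 * ∑ v, ∑ u ∈ N v, w v u * ∑ l, (Ystar v l - Ystar u l) * (D v l - D u l)
        + ∑ v, ∑ u ∈ N v, w v u * ∑ l, (D v l - D u l) ^ 2 := by
    have p : ∀ v, ∑ u ∈ N v, w v u * ∑ l, (Z v l - Z u l) ^ 2
        = ∑ u ∈ N v, w v u * ∑ l, (Ystar v l - Ystar u l) ^ 2
          + (2 * ∑ u ∈ N v, w v u * ∑ l, (Ystar v l - Ystar u l) * (D v l - D u l)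
          + ∑ u ∈ N v, w v u * ∑ l, (D v l - D u l) ^ 2) := by
      intro v
      rw [weighted_sq_expand (N v) Finset.univ (w v)
        (fun u l => Z v l - Z u l) (fun u l => Ystar v l - Ystar u l)
        (fun u l => D v l - D u l) (fun u l => by
          show Z v l - Z u l = (Ystar v l - Ystar u l) + (D v l - D u l)
          rw [hZ v l, hZ u l]; ring)]
      ring
    rw [Finset.sum_congr rfl fun v _ => p v, Finset.sum_add_distrib,
      Finset.sum_add_distrib, Finset.mul_sum]
    ring
  -- nonnegativity of quadratic remainders
  have hQ1 : (0:ℝ) ≤ ∑ v, s v * ∑ l, D v l ^ 2 :=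
    Finset.sum_nonneg fun v _ => mul_nonneg (hs v)
      (Finset.sum_nonneg fun l _ => sq_nonneg _)
  have hQ2 : (0:ℝ) ≤ ∑ v, ∑ u ∈ N v, w v u * ∑ l, (D v l - D u l) ^ 2 :=
    Finset.sum_nonneg fun v _ => Finset.sum_nonneg fun u _ => mul_nonneg (hw v u)
      (Finset.sum_nonneg fun l _ => sq_nonneg _)
  have hQ3 : (0:ℝ) ≤ ∑ v : V, ∑ l, D v l ^ 2 :=
    Finset.sum_nonneg fun v _ => Finset.sum_nonneg fun l _ => sq_nonneg _
  rw [e1, e2, e3', hcross]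
  nlinarith [mul_nonneg h1 hQ1, mul_nonneg h2 hQ2, mul_nonneg h3.le hQ3, hL]
end
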